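/- ∫_{-∞}^{∞} z⁵·2φ(z)Φ(λz) dz = bδ(15 + 20λ² + 8λ⁴)/(1+λ²)², where b = √(2/π) and δ = λ/√(1+λ²); i.e., the fifth moment of the skew normal SN(λ). -/

import Mathlib

open Real MeasureTheory Filter

/-- standard normal pdf -/
noncomputable def phi (z : ℝ) : ℝ := (Real.sqrt (2 * Real.pi))⁻¹ * Real.exp (-z ^ 2 / 2)

/-- standard normal cdf -/
noncomputable def Phi (z : ℝ) : ℝ := ∫ t in Set.Iic z, phi t

noncomputable def bconst : ℝ := Real.sqrt (2 / Real.pi)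

noncomputable def del (l : ℝ) : ℝ := l / Real.sqrt (1 + l ^ 2)

/-- GABSN normalizing constant -/
noncomputable def C (a β l : ℝ) : ℝ :=
  1 + 3 * a * β - a * bconst * del l - β * bconst * del l * (3 + 2 * l ^ 2) / (1 + l ^ 2)
    + a ^ 2 / 2 + 15 * β ^ 2 / 2

/-- GABSN density -/
noncomputable def f (a β l z : ℝ) : ℝ :=
  (((1 - a * z - β * z ^ 3) ^ 2 + 1) * phi z * Phi (l * z)) / C a β l

/-!
Integrate by parts against `2 Φ(λz)`: since `-(z⁴ + 4z² + 8) φ(z)` is an antiderivative of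
`z⁵ φ(z)` and `(2 Φ(λz))' = 2λ φ(λz)`, the fifth moment equals
`2λ ∫ (z⁴ + 4z² + 8) φ(z) φ(λz) dz`. The product `φ(z) φ(λz)` is proportional to the centred
Gaussian density of variance `1 / (1 + λ²)`, whose second and fourth moments follow from the
Gaussian integral by the recursion `∫ x^(n+2) e^(-bx²) = (n+1)/(2b) ∫ x^n e^(-bx²)`.
-/

lemma hasDerivAt_exp_neg_mul_sq (b x : ℝ) :
    HasDerivAt (fun x : ℝ => exp (-b * x ^ 2)) (-2 * b * x * exp (-b * x ^ 2)) x := by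
  refine ((hasDerivAt_pow 2 x).const_mul (-b)).exp.congr_deriv ?_
  push_cast
  ring

section GaussianMoments

variable {b : ℝ}

lemma integrable_pow_mul_exp_neg_mul_sq (hb : 0 < b) (n : ℕ) :
    Integrable fun x : ℝ => x ^ n * exp (-b * x ^ 2) := by
  simpa only [rpow_natCast] using
    integrable_rpow_mul_exp_neg_mul_sq hb (s := n) (by linarith [n.cast_nonneg (α := ℝ)])

lemma integral_pow_add_two_mul_exp_neg_mul_sq (hb : 0 < b) (n : ℕ) :
    ∫ x : ℝ, x ^ (n + 2) * exp (-b * x ^ 2)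
      = (n + 1) / (2 * b) * ∫ x : ℝ, x ^ n * exp (-b * x ^ 2) := by
  have hu (x : ℝ) : HasDerivAt (fun x : ℝ => x ^ (n + 1)) ((n + 1) * x ^ n) x := by
    simpa using hasDerivAt_pow (n + 1) x
  have hv (x : ℝ) : HasDerivAt (fun x : ℝ => -(2 * b)⁻¹ * exp (-b * x ^ 2))
      (x * exp (-b * x ^ 2)) x := by
    refine ((hasDerivAt_exp_neg_mul_sq b x).const_mul (-(2 * b)⁻¹)).congr_deriv ?_
    field_simp
  have hint (k : ℕ) (c : ℝ) : Integrable fun x : ℝ => c * (x ^ k * exp (-b * x ^ 2)) :=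
    (integrable_pow_mul_exp_neg_mul_sq hb k).const_mul c
  have parts := integral_mul_deriv_eq_deriv_mul_of_integrable (fun x _ => hu x) (fun x _ => hv x)
    ((hint (n + 2) 1).congr (.of_forall fun x => by simp only [Pi.mul_apply]; ring))
    ((hint n (-(n + 1) / (2 * b))).congr (.of_forall fun x => by simp only [Pi.mul_apply]; ring))
    ((hint (n + 1) (-(2 * b)⁻¹)).congr (.of_forall fun x => by simp only [Pi.mul_apply]; ring))
  calc ∫ x : ℝ, x ^ (n + 2) * exp (-b * x ^ 2)
      = ∫ x : ℝ, x ^ (n + 1) * (x * exp (-b * x ^ 2)) := by congr with x; ring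
    _ = -∫ x : ℝ, (n + 1) * x ^ n * (-(2 * b)⁻¹ * exp (-b * x ^ 2)) := parts
    _ = -∫ x : ℝ, -(n + 1) / (2 * b) * (x ^ n * exp (-b * x ^ 2)) := by
        congr with x; field_simp
    _ = (n + 1) / (2 * b) * ∫ x : ℝ, x ^ n * exp (-b * x ^ 2) := by
        rw [integral_const_mul]; ring

lemma integral_sq_mul_exp_neg_mul_sq (hb : 0 < b) :
    ∫ x : ℝ, x ^ 2 * exp (-b * x ^ 2) = √(π / b) / (2 * b) := by
  rw [integral_pow_add_two_mul_exp_neg_mul_sq hb 0]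
  simp only [pow_zero, one_mul, integral_gaussian]
  push_cast
  ring

lemma integral_pow_four_mul_exp_neg_mul_sq (hb : 0 < b) :
    ∫ x : ℝ, x ^ 4 * exp (-b * x ^ 2) = 3 * √(π / b) / (4 * b ^ 2) := by
  rw [integral_pow_add_two_mul_exp_neg_mul_sq hb 2, integral_sq_mul_exp_neg_mul_sq hb]
  field_simp
  norm_num

end GaussianMoments

lemma phi_eq_exp (z : ℝ) : phi z = (√(2 * π))⁻¹ * exp (-(1 / 2) * z ^ 2) := by
  rw [phi]; congr 2; ring

lemma phi_nonneg (z : ℝ) : 0 ≤ phi z := by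
  rw [phi]; positivity

lemma continuous_phi : Continuous phi := by
  unfold phi; fun_prop

lemma integrable_pow_mul_phi (n : ℕ) : Integrable fun z : ℝ => z ^ n * phi z := by
  simp_rw [phi_eq_exp, mul_left_comm _ (√(2 * π))⁻¹]
  exact (integrable_pow_mul_exp_neg_mul_sq one_half_pos n).const_mul _

lemma integrable_phi : Integrable phi := by
  simpa using integrable_pow_mul_phi 0

lemma integral_phi : ∫ z : ℝ, phi z = 1 := by
  simp_rw [phi_eq_exp]
  rw [integral_const_mul, integral_gaussian, show π / (1 / 2) = 2 * π by ring]
  exact inv_mul_cancel₀ (by positivity)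

lemma Phi_nonneg (z : ℝ) : 0 ≤ Phi z :=
  integral_nonneg phi_nonneg

lemma Phi_le_one (z : ℝ) : Phi z ≤ 1 :=
  integral_phi ▸ setIntegral_le_integral integrable_phi (.of_forall phi_nonneg)

lemma hasDerivAt_phi (x : ℝ) : HasDerivAt phi (-x * phi x) x := by
  rw [show phi = fun y => (√(2 * π))⁻¹ * exp (-(1 / 2) * y ^ 2) from funext phi_eq_exp]
  refine ((hasDerivAt_exp_neg_mul_sq (1 / 2) x).const_mul (√(2 * π))⁻¹).congr_deriv ?_
  ring

lemma hasDerivAt_Phi (x : ℝ) : HasDerivAt Phi (phi x) x := by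
  have hPhi : Phi = fun u => Phi 0 + ∫ t in (0 : ℝ)..u, phi t := by
    ext u
    have := intervalIntegral.integral_Iic_sub_Iic (μ := volume) (a := 0) (b := u)
      integrable_phi.integrableOn integrable_phi.integrableOn
    rw [Phi, Phi] at *
    linarith
  rw [hPhi]
  exact (intervalIntegral.integral_hasDerivAt_right (continuous_phi.intervalIntegrable _ _)
    (continuous_phi.stronglyMeasurableAtFilter _ _) continuous_phi.continuousAt).const_add _

lemma phi_mul_phi_mul (l z : ℝ) :
    phi z * phi (l * z) = (2 * π)⁻¹ * exp (-((1 + l ^ 2) / 2) * z ^ 2) := by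
  rw [phi_eq_exp, phi_eq_exp, mul_mul_mul_comm, ← mul_inv, ← exp_add,
    mul_self_sqrt (by positivity)]
  congr 2
  ring

lemma hasDerivAt_quartic_mul_phi (x : ℝ) :
    HasDerivAt (fun z => -((z ^ 4 + 4 * z ^ 2 + 8) * phi z)) (x ^ 5 * phi x) x := by
  have hp : HasDerivAt (fun z : ℝ => z ^ 4 + 4 * z ^ 2 + 8) (4 * x ^ 3 + 8 * x) x := by
    refine (((hasDerivAt_pow 4 x).add ((hasDerivAt_pow 2 x).const_mul 4)).add_const 8).congr_deriv
      ?_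
    push_cast
    ring
  refine (hp.mul (hasDerivAt_phi x)).neg.congr_deriv ?_
  ring

lemma integral_pow_five_mul_skewNormal (l : ℝ) :
    ∫ z : ℝ, z ^ 5 * (2 * phi z * Phi (l * z))
      = 2 * l * ∫ z : ℝ, (z ^ 4 + 4 * z ^ 2 + 8) * (phi z * phi (l * z)) := by
  have hu (x : ℝ) : HasDerivAt (fun z => 2 * Phi (l * z)) (2 * l * phi (l * x)) x := by
    refine (((hasDerivAt_Phi (l * x)).comp x ((hasDerivAt_id x).const_mul l)).const_mul 2
      ).congr_deriv ?_
    ring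
  have hu_meas : AEStronglyMeasurable (fun z => 2 * Phi (l * z)) :=
    (continuous_iff_continuousAt.2 fun x => (hu x).continuousAt).aestronglyMeasurable
  have hu_bdd : ∀ᵐ z ∂volume, ‖2 * Phi (l * z)‖ ≤ 2 := .of_forall fun z => by
    rw [norm_mul, Real.norm_of_nonneg (Phi_nonneg _), Real.norm_ofNat]
    linarith [Phi_le_one (l * z)]
  have hv_int : Integrable fun z => -((z ^ 4 + 4 * z ^ 2 + 8) * phi z) := by
    refine (((integrable_pow_mul_phi 4).add ((integrable_pow_mul_phi 2).const_mul 4)).add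
      ((integrable_pow_mul_phi 0).const_mul 8)).neg.congr (.of_forall fun z => ?_)
    simp only [Pi.neg_apply, Pi.add_apply]; ring
  have hpp (n : ℕ) : Integrable fun z : ℝ => z ^ n * (phi z * phi (l * z)) := by
    simp_rw [phi_mul_phi_mul, mul_left_comm _ (2 * π)⁻¹]
    exact (integrable_pow_mul_exp_neg_mul_sq (by positivity) n).const_mul _
  have hu'v : Integrable fun z => 2 * l * phi (l * z) * -((z ^ 4 + 4 * z ^ 2 + 8) * phi z) := by
    refine ((((hpp 4).add ((hpp 2).const_mul 4)).add ((hpp 0).const_mul 8)).const_mul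
      (-(2 * l))).congr (.of_forall fun z => ?_)
    simp only [Pi.add_apply]; ring
  have parts := integral_mul_deriv_eq_deriv_mul_of_integrable (fun x _ => hu x)
    (fun x _ => hasDerivAt_quartic_mul_phi x)
    ((integrable_pow_mul_phi 5).bdd_mul hu_meas hu_bdd) hu'v (hv_int.bdd_mul hu_meas hu_bdd)
  calc ∫ z : ℝ, z ^ 5 * (2 * phi z * Phi (l * z))
      = ∫ z : ℝ, 2 * Phi (l * z) * (z ^ 5 * phi z) := by congr with z; ring
    _ = -∫ z : ℝ, 2 * l * phi (l * z) * -((z ^ 4 + 4 * z ^ 2 + 8) * phi z) := parts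
    _ = 2 * l * ∫ z : ℝ, (z ^ 4 + 4 * z ^ 2 + 8) * (phi z * phi (l * z)) := by
        rw [← integral_const_mul, ← integral_neg]
        congr with z; ring

lemma integral_quartic_mul_phi_mul_phi (l : ℝ) :
    ∫ z : ℝ, (z ^ 4 + 4 * z ^ 2 + 8) * (phi z * phi (l * z))
      = (2 * π)⁻¹ * √(2 * π / (1 + l ^ 2)) * (15 + 20 * l ^ 2 + 8 * l ^ 4)
          / (1 + l ^ 2) ^ 2 := by
  set b := (1 + l ^ 2) / 2
  have hb : 0 < b := by positivity
  have h4 := integrable_pow_mul_exp_neg_mul_sq hb 4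
  have h2 : Integrable fun z : ℝ => 4 * (z ^ 2 * exp (-b * z ^ 2)) :=
    (integrable_pow_mul_exp_neg_mul_sq hb 2).const_mul 4
  have h0 : Integrable fun z : ℝ => 8 * exp (-b * z ^ 2) :=
    (integrable_exp_neg_mul_sq hb).const_mul 8
  have h42 : Integrable fun z : ℝ => z ^ 4 * exp (-b * z ^ 2) + 4 * (z ^ 2 * exp (-b * z ^ 2)) :=
    h4.add h2
  have hsplit (z : ℝ) : (z ^ 4 + 4 * z ^ 2 + 8) * (phi z * phi (l * z)) = (2 * π)⁻¹ *
      (z ^ 4 * exp (-b * z ^ 2) + 4 * (z ^ 2 * exp (-b * z ^ 2)) + 8 * exp (-b * z ^ 2)) := by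
    rw [phi_mul_phi_mul]; ring
  simp_rw [hsplit]
  rw [integral_const_mul, integral_add h42 h0, integral_add h4 h2, integral_const_mul,
    integral_const_mul, integral_pow_four_mul_exp_neg_mul_sq hb, integral_sq_mul_exp_neg_mul_sq hb,
    integral_gaussian, show π / b = 2 * π / (1 + l ^ 2) by field_simp; ring]
  field_simp
  ring

theorem stmt_11 (l : ℝ) :
    ∫ z : ℝ, z ^ 5 * (2 * phi z * Phi (l * z))
      = bconst * del l * (15 + 20 * l ^ 2 + 8 * l ^ 4) / (1 + l ^ 2) ^ 2 := by
  rw [integral_pow_five_mul_skewNormal, integral_quartic_mul_phi_mul_phi]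
  have hsqrt : √(2 * π / (1 + l ^ 2)) = bconst * π / √(1 + l ^ 2) := by
    rw [bconst, sqrt_div' _ (by positivity), sqrt_div' _ pi_pos.le, sqrt_mul zero_le_two]
    field_simp
    exact sq_sqrt pi_pos.le
  rw [hsqrt, del]
  field_simp
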